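/- As p tends to 0 from above, the ratio (1 − p)^{1/p − 1} / (1 − (1 − p)^{1/p}) tends to e^{−1}/(1 − e^{−1}) ≈ 0.58. (Interpretation: the SAFFRON-inspired scheme finds an infected individual in a segment of 1/p individuals exactly when the segment contains exactly one infected individual, so conditional on the segment containing at least one infected individual, the probability of finding one tends to e^{−1}/(1 − e^{−1}), i.e. the scheme expects to find about 58% of those infected.) -/

import Mathlib

open Filter Real Set Topology

/-- The substitution `x = 1 / p` turns this into `(1 + t / x) ^ x → exp t` as `x → ∞`. -/
theorem tendsto_one_add_mul_rpow_one_div_nhdsGT_zero (t : ℝ) :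
    Tendsto (fun p : ℝ => (1 + t * p) ^ (1 / p)) (𝓝[>] 0) (𝓝 (exp t)) := by
  refine ((tendsto_one_add_div_rpow_exp t).comp tendsto_inv_nhdsGT_zero).congr fun p => ?_
  simp only [Function.comp, div_inv_eq_mul, one_div]

theorem tendsto_one_sub_rpow_one_div_nhdsGT_zero :
    Tendsto (fun p : ℝ => (1 - p) ^ (1 / p)) (𝓝[>] 0) (𝓝 (exp (-1))) := by
  simpa [← sub_eq_add_neg] using tendsto_one_add_mul_rpow_one_div_nhdsGT_zero (-1)

/-- As `p → 0⁺`, the conditional probability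
`(1 - p)^(1/p - 1) / (1 - (1 - p)^(1/p))` tends to `e⁻¹ / (1 - e⁻¹)`. -/
theorem tendsto_saffron_conditional_prob :
    Filter.Tendsto
      (fun p : ℝ => (1 - p) ^ (1 / p - 1) / (1 - (1 - p) ^ (1 / p)))
      (nhdsWithin 0 (Set.Ioo (0:ℝ) 1))
      (nhds (Real.exp (-1) / (1 - Real.exp (-1)))) := by
  rw [nhdsWithin_Ioo_eq_nhdsGT one_pos]
  have hpow := tendsto_one_sub_rpow_one_div_nhdsGT_zero
  have hbase : Tendsto (fun p : ℝ => 1 - p) (𝓝[>] 0) (𝓝 1) := by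
    simpa using (tendsto_const_nhds.sub tendsto_id).mono_left (nhdsWithin_le_nhds (a := (0 : ℝ)))
  have hden_ne : 1 - exp (-1) ≠ 0 := (sub_pos.2 (exp_lt_one_iff.2 (by norm_num))).ne'
  have hratio := (hpow.div hbase one_ne_zero).div (tendsto_const_nhds.sub hpow) hden_ne
  rw [div_one] at hratio
  refine hratio.congr' ?_
  filter_upwards [Ioo_mem_nhdsGT one_pos] with p hp
  rw [Pi.div_apply, Pi.div_apply, rpow_sub_one (by linarith [hp.2])]
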